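/- Let n ≥ 2 and let φ ∈ L^∞((0,∞)). Then for every ε > 0, ∫_0^1 φ(t) ∫_{{y ∈ ℝ^n : |y| < ε}} ∂^2/∂y_1^2 ( e^{-|y|^2/(4t)} / (2√(π t))^n ) dy dt = -M ∫_0^{1/ε^2} φ(s ε^2) e^{-1/(4s)} s^{-n/2 - 1} ds, where M = (2√π)^{-n} ∫_{{z̄ ∈ ℝ^{n-1} : |z̄| < 1}} √(1 - |z̄|^2) dz̄. -/

import Mathlib

open Real MeasureTheory Set
open scoped ENNReal

/-- The Gauss–Weierstrass kernel `e^{-|y|²/(4t)}/(2√(πt))^n` on `ℝ^n`. -/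
noncomputable def gaussKer (n : ℕ) (t : ℝ) (y : Fin n → ℝ) : ℝ :=
  Real.exp (-(∑ j, y j ^ 2) / (4 * t)) / (2 * Real.sqrt (π * t)) ^ n

/-- The second partial derivative `∂²/∂y₁²` of the Gauss–Weierstrass kernel. -/
noncomputable def d2GaussKer (n : ℕ) (hn : 0 < n) (t : ℝ) (y : Fin n → ℝ) : ℝ :=
  deriv (deriv (fun v : ℝ => gaussKer n t (Function.update y ⟨0, hn⟩ v))) (y ⟨0, hn⟩)

/-- `α(ε) = ∫_0^1 φ(t) ∫_{|y|<ε} ∂²/∂y₁² (e^{-|y|²/(4t)}/(2√(πt))^n) dy dt`. -/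
noncomputable def alphaFun (n : ℕ) (hn : 0 < n) (φ : ℝ → ℝ) (ε : ℝ) : ℝ :=
  ∫ t in Ioc (0 : ℝ) 1, φ t *
    ∫ y in {y : Fin n → ℝ | Real.sqrt (∑ j, y j ^ 2) < ε}, d2GaussKer n hn t y

/-- The constant `M = (2√π)^{-n} ∫_{|z̄|<1, z̄ ∈ ℝ^{n-1}} √(1-|z̄|²) dz̄`. -/
noncomputable def Mconst (n : ℕ) : ℝ :=
  ((2 * Real.sqrt π) ^ n)⁻¹ *
    ∫ z in {z : Fin (n - 1) → ℝ | ∑ j, z j ^ 2 < 1}, Real.sqrt (1 - ∑ j, z j ^ 2)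

/-!
Split off the first coordinate, `y = (x, z̄)`. On each chord `|x| < √(ε² - |z̄|²)` of the ball the
integral of `∂²/∂x²` of the kernel is, by the fundamental theorem of calculus, a boundary term, and
since the chord ends on the sphere `|y| = ε` it equals
`-(√(ε² - |z̄|²) / t) e^{-ε²/(4t)} / (2√(πt))^n`. Integrating in `z̄` and rescaling `z̄ ↦ ε z̄`
gives `-M ε^n e^{-ε²/(4t)} t^{-n/2-1}` for the inner integral, and the substitution `t = s ε²` turns the
outer integral into the right-hand side.
-/

-- `c` stands for `|z̄|²`, the squared norm of the coordinates other than the first.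
noncomputable def gaussProfile (t c v : ℝ) : ℝ :=
  Real.exp (-(v ^ 2 + c) / (4 * t))

section GaussProfile

variable (t c : ℝ)

theorem hasDerivAt_gaussProfile (v : ℝ) :
    HasDerivAt (gaussProfile t c) (-(v / (2 * t)) * gaussProfile t c v) v := by
  have h : HasDerivAt (fun v => -(v ^ 2 + c) / (4 * t)) (-(v / (2 * t))) v :=
    (((hasDerivAt_pow 2 v).add_const c).fun_neg.div_const (4 * t)).congr_deriv (by ring)
  exact h.exp.congr_deriv (mul_comm _ _)

theorem hasDerivAt_deriv_gaussProfile (v : ℝ) :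
    HasDerivAt (fun v => -(v / (2 * t)) * gaussProfile t c v)
      (((v / (2 * t)) ^ 2 - 1 / (2 * t)) * gaussProfile t c v) v :=
  (((hasDerivAt_id v).div_const (2 * t)).fun_neg.fun_mul
    (hasDerivAt_gaussProfile t c v)).congr_deriv (by simp only [id]; ring)

theorem continuous_deriv2_gaussProfile :
    Continuous fun v => ((v / (2 * t)) ^ 2 - 1 / (2 * t)) * gaussProfile t c v := by
  unfold gaussProfile
  fun_prop

theorem integral_Ioo_deriv2_gaussProfile {a : ℝ} (ha : 0 ≤ a) :
    ∫ x in Ioo (-a) a, ((x / (2 * t)) ^ 2 - 1 / (2 * t)) * gaussProfile t c x =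
      -(a / t) * gaussProfile t c a := by
  rw [← integral_Ioc_eq_integral_Ioo, ← intervalIntegral.integral_of_le (by linarith),
    intervalIntegral.integral_eq_sub_of_hasDerivAt
      (fun x _ => hasDerivAt_deriv_gaussProfile t c x)
      ((continuous_deriv2_gaussProfile t c).intervalIntegrable _ _)]
  simp only [gaussProfile, neg_sq]
  ring

end GaussProfile

theorem gaussKer_cons (m : ℕ) (t v : ℝ) (z : Fin m → ℝ) :
    gaussKer (m + 1) t (Fin.cons v z) =
      gaussProfile t (∑ j, z j ^ 2) v / (2 * Real.sqrt (π * t)) ^ (m + 1) := by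
  simp [gaussKer, gaussProfile, Fin.sum_univ_succ]

theorem d2GaussKer_cons (m : ℕ) (hn : 0 < m + 1) (t x : ℝ) (z : Fin m → ℝ) :
    d2GaussKer (m + 1) hn t (Fin.cons x z) =
      ((x / (2 * t)) ^ 2 - 1 / (2 * t)) * gaussProfile t (∑ j, z j ^ 2) x /
        (2 * Real.sqrt (π * t)) ^ (m + 1) := by
  have hderiv : deriv (fun v => gaussKer (m + 1) t (Fin.cons v z)) =
      fun v => -(v / (2 * t)) * gaussProfile t (∑ j, z j ^ 2) v /
        (2 * Real.sqrt (π * t)) ^ (m + 1) := by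
    ext v
    simp only [gaussKer_cons]
    exact ((hasDerivAt_gaussProfile _ _ v).div_const _).deriv
  have h0 : (⟨0, hn⟩ : Fin (m + 1)) = 0 := rfl
  simp only [d2GaussKer, h0, Fin.update_cons_zero, Fin.cons_zero, hderiv]
  exact ((hasDerivAt_deriv_gaussProfile _ _ x).div_const _).deriv

theorem continuous_d2GaussKer (m : ℕ) (hn : 0 < m + 1) (t : ℝ) :
    Continuous (d2GaussKer (m + 1) hn t) := by
  have h : d2GaussKer (m + 1) hn t = fun y =>
      ((y 0 / (2 * t)) ^ 2 - 1 / (2 * t)) * gaussProfile t (∑ j, Fin.tail y j ^ 2) (y 0) /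
        (2 * Real.sqrt (π * t)) ^ (m + 1) := by
    ext y
    rw [← d2GaussKer_cons, Fin.cons_self_tail]
  rw [h]
  unfold gaussProfile Fin.tail
  fun_prop

theorem integral_eq_integral_integral_cons {E : Type*} [NormedAddCommGroup E] [NormedSpace ℝ E]
    {m : ℕ} {G : (Fin (m + 1) → ℝ) → E} (hG : Integrable G) :
    ∫ y, G y = ∫ z : Fin m → ℝ, ∫ x : ℝ, G (Fin.cons x z) := by
  have he := (volume_preserving_piFinSuccAbove (fun _ : Fin (m + 1) => ℝ) 0).symm
  rw [← he.integrable_comp_emb (MeasurableEquiv.measurableEmbedding _),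
    Measure.volume_eq_prod] at hG
  rw [← he.integral_comp' G, Measure.volume_eq_prod]
  refine (integral_prod_symm _ hG).trans ?_
  simp [MeasurableEquiv.piFinSuccAbove_symm_apply, Fin.insertNthEquiv, Fin.insertNth_zero']

theorem mem_Ioo_neg_sqrt_sqrt_iff {x s : ℝ} : x ∈ Ioo (-Real.sqrt s) (Real.sqrt s) ↔ x ^ 2 < s := by
  rw [mem_Ioo, ← abs_lt, Real.lt_sqrt (abs_nonneg x), sq_abs]

theorem setIntegral_sum_sq_lt_eq_integral_integral_cons {E : Type*} [NormedAddCommGroup E]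
    [NormedSpace ℝ E] {m : ℕ} {r : ℝ} {G : (Fin (m + 1) → ℝ) → E}
    (hG : IntegrableOn G {y | ∑ j, y j ^ 2 < r}) :
    ∫ y in {y | ∑ j, y j ^ 2 < r}, G y =
      ∫ z : Fin m → ℝ, ∫ x in Ioo (-Real.sqrt (r - ∑ j, z j ^ 2)) (Real.sqrt (r - ∑ j, z j ^ 2)),
        G (Fin.cons x z) := by
  have hmeas : MeasurableSet {y : Fin (m + 1) → ℝ | ∑ j, y j ^ 2 < r} :=
    measurableSet_lt (by fun_prop) measurable_const
  rw [← integral_indicator hmeas,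
    integral_eq_integral_integral_cons (hG.integrable_indicator hmeas)]
  congr 1 with z
  rw [← integral_indicator measurableSet_Ioo]
  congr 1 with x
  have hmem : Fin.cons x z ∈ {y : Fin (m + 1) → ℝ | ∑ j, y j ^ 2 < r} ↔
      x ∈ Ioo (-Real.sqrt (r - ∑ j, z j ^ 2)) (Real.sqrt (r - ∑ j, z j ^ 2)) := by
    rw [mem_Ioo_neg_sqrt_sqrt_iff, lt_sub_iff_add_lt]
    simp [Fin.sum_univ_succ]
  simp only [indicator, hmem]

theorem integral_sqrt_sq_sub_sum_sq (m : ℕ) {ε : ℝ} (hε : 0 < ε) :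
    ∫ z : Fin m → ℝ, Real.sqrt (ε ^ 2 - ∑ j, z j ^ 2) =
      ε ^ (m + 1) * ∫ z : Fin m → ℝ, Real.sqrt (1 - ∑ j, z j ^ 2) := by
  have hscale : ∀ z : Fin m → ℝ,
      Real.sqrt (ε ^ 2 - ∑ j, (ε • z) j ^ 2) = ε * Real.sqrt (1 - ∑ j, z j ^ 2) := by
    intro z
    have : ε ^ 2 - ∑ j, (ε • z) j ^ 2 = ε ^ 2 * (1 - ∑ j, z j ^ 2) := by
      simp only [Pi.smul_apply, smul_eq_mul, mul_pow, ← Finset.mul_sum]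
      ring
    rw [this, Real.sqrt_mul (sq_nonneg ε), Real.sqrt_sq hε.le]
  have h := Measure.integral_comp_smul_of_nonneg volume
    (fun z : Fin m → ℝ => Real.sqrt (ε ^ 2 - ∑ j, z j ^ 2)) ε (hR := hε.le)
  simp only [hscale, integral_const_mul, Module.finrank_fin_fun, smul_eq_mul] at h
  field_simp at h
  rw [← h]
  ring

theorem sqrt_mul_gaussProfile_sqrt (t c r : ℝ) :
    Real.sqrt (r - c) * gaussProfile t c (Real.sqrt (r - c)) =
      Real.sqrt (r - c) * Real.exp (-r / (4 * t)) := by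
  rcases le_or_gt c r with hcr | hrc
  · rw [gaussProfile, Real.sq_sqrt (by linarith), sub_add_cancel]
  · rw [Real.sqrt_eq_zero'.2 (by linarith), zero_mul, zero_mul]

theorem setIntegral_d2GaussKer (m : ℕ) (hn : 0 < m + 1) (t : ℝ) {ε : ℝ} (hε : 0 < ε) :
    ∫ y in {y : Fin (m + 1) → ℝ | Real.sqrt (∑ j, y j ^ 2) < ε}, d2GaussKer (m + 1) hn t y =
      -(ε ^ (m + 1) * Real.exp (-ε ^ 2 / (4 * t)) / (t * (2 * Real.sqrt (π * t)) ^ (m + 1))) *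
        ∫ z : Fin m → ℝ, Real.sqrt (1 - ∑ j, z j ^ 2) := by
  have hball : {y : Fin (m + 1) → ℝ | Real.sqrt (∑ j, y j ^ 2) < ε} =
      {y | ∑ j, y j ^ 2 < ε ^ 2} := by
    ext y
    exact Real.sqrt_lt' hε
  have hsub : {y : Fin (m + 1) → ℝ | ∑ j, y j ^ 2 < ε ^ 2} ⊆ Metric.closedBall 0 ε := by
    intro y hy
    rw [mem_closedBall_zero_iff, pi_norm_le_iff_of_nonneg hε.le]
    intro j
    refine Real.norm_eq_abs _ ▸ abs_le_of_sq_le_sq ?_ hε.le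
    exact (Finset.single_le_sum (fun i _ => sq_nonneg (y i)) (Finset.mem_univ j)).trans hy.le
  have hint : IntegrableOn (d2GaussKer (m + 1) hn t) {y | ∑ j, y j ^ 2 < ε ^ 2} :=
    ((continuous_d2GaussKer m hn t).continuousOn.integrableOn_compact
      (isCompact_closedBall 0 ε)).mono_set hsub
  have hslice : ∀ z : Fin m → ℝ,
      ∫ x in Ioo (-Real.sqrt (ε ^ 2 - ∑ j, z j ^ 2)) (Real.sqrt (ε ^ 2 - ∑ j, z j ^ 2)),
        d2GaussKer (m + 1) hn t (Fin.cons x z) =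
      -(Real.exp (-ε ^ 2 / (4 * t)) / (t * (2 * Real.sqrt (π * t)) ^ (m + 1))) *
        Real.sqrt (ε ^ 2 - ∑ j, z j ^ 2) := by
    intro z
    simp only [d2GaussKer_cons, integral_div]
    rw [integral_Ioo_deriv2_gaussProfile _ _ (Real.sqrt_nonneg _), neg_mul, div_mul_eq_mul_div,
      sqrt_mul_gaussProfile_sqrt]
    ring
  rw [hball, setIntegral_sum_sq_lt_eq_integral_integral_cons hint]
  simp only [hslice, integral_const_mul, integral_sqrt_sq_sub_sum_sq m hε]
  ring

theorem inv_mul_two_mul_sqrt_pi_mul_pow (n : ℕ) {t : ℝ} (ht : 0 < t) :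
    (t * (2 * Real.sqrt (π * t)) ^ n)⁻¹ = ((2 * Real.sqrt π) ^ n)⁻¹ * t ^ (-(n : ℝ) / 2 - 1) := by
  have hsqrt : Real.sqrt t ^ n = t ^ ((n : ℝ) / 2) := by
    rw [Real.sqrt_eq_rpow, ← Real.rpow_natCast, ← Real.rpow_mul ht.le]
    ring_nf
  rw [show -(n : ℝ) / 2 - 1 = -((n : ℝ) / 2 + 1) by ring, Real.rpow_neg ht.le,
    Real.rpow_add ht, Real.rpow_one, Real.sqrt_mul pi_pos.le, ← mul_assoc, mul_pow, hsqrt,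
    mul_inv, mul_inv, mul_inv]
  ring

theorem setIntegral_Ioc_zero_comp_mul_right (ψ : ℝ → ℝ) {b c : ℝ} (hb : 0 ≤ b) (hc : 0 < c) :
    ∫ t in Ioc 0 b, ψ t = c * ∫ s in Ioc 0 (b / c), ψ (s * c) := by
  have h := intervalIntegral.integral_comp_mul_right ψ (a := 0) (b := b / c) hc.ne'
  rw [zero_mul, div_mul_cancel₀ b hc.ne', intervalIntegral.integral_of_le hb,
    intervalIntegral.integral_of_le (div_nonneg hb hc.le), smul_eq_mul] at h
  rw [h, mul_inv_cancel_left₀ hc.ne']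

theorem setIntegral_Ioc_heat_rescale (φ : ℝ → ℝ) (a : ℝ) {ε : ℝ} (hε : 0 < ε) :
    ε ^ a * ∫ t in Ioc (0 : ℝ) 1, φ t * (Real.exp (-ε ^ 2 / (4 * t)) * t ^ (-a / 2 - 1)) =
      ∫ s in Ioc (0 : ℝ) (1 / ε ^ 2),
        φ (s * ε ^ 2) * Real.exp (-1 / (4 * s)) * s ^ (-a / 2 - 1) := by
  rw [setIntegral_Ioc_zero_comp_mul_right _ zero_le_one (pow_pos hε 2), ← mul_assoc,
    ← integral_const_mul]
  refine setIntegral_congr_fun measurableSet_Ioc fun s ⟨hs, _⟩ => ?_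
  have hexp : -ε ^ 2 / (4 * (s * ε ^ 2)) = -1 / (4 * s) := by
    field_simp
  have hpow : (s * ε ^ 2) ^ (-a / 2 - 1) = s ^ (-a / 2 - 1) * (ε ^ a * ε ^ 2)⁻¹ := by
    rw [Real.mul_rpow hs.le (by positivity), ← Real.rpow_natCast_mul hε.le,
      show ((2 : ℕ) : ℝ) * (-a / 2 - 1) = -(a + 2) by push_cast; ring,
      Real.rpow_neg hε.le, Real.rpow_add hε, Real.rpow_two]
  have hεa : ε ^ a ≠ 0 := (Real.rpow_pos_of_pos hε a).ne'
  rw [hexp, hpow]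
  field_simp

/-- For `n ≥ 2` and `φ ∈ L^∞((0,∞))`:
`α(ε) = -M ∫_0^{1/ε²} φ(sε²) e^{-1/(4s)} s^{-n/2-1} ds` for every `ε > 0`. -/
theorem alphaFun_eq (n : ℕ) (hn : 2 ≤ n) (φ : ℝ → ℝ) :
    ∀ ε : ℝ, 0 < ε →
      alphaFun n (by omega) φ ε =
        -Mconst n * ∫ s in Ioc (0 : ℝ) (1 / ε ^ 2),
          φ (s * ε ^ 2) * Real.exp (-1 / (4 * s)) * s ^ (-(n : ℝ) / 2 - 1) := by
  intro ε hε
  obtain ⟨m, rfl⟩ : ∃ m, n = m + 1 := ⟨n - 1, by omega⟩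
  have hM : Mconst (m + 1) =
      ((2 * Real.sqrt π) ^ (m + 1))⁻¹ * ∫ z : Fin m → ℝ, Real.sqrt (1 - ∑ j, z j ^ 2) := by
    refine congrArg _ (setIntegral_eq_integral_of_forall_compl_eq_zero fun z hz => ?_)
    exact Real.sqrt_eq_zero'.2 (sub_nonpos.2 (not_lt.1 hz))
  have hinner : ∀ t ∈ Ioc (0 : ℝ) 1,
      φ t * ∫ y in {y : Fin (m + 1) → ℝ | Real.sqrt (∑ j, y j ^ 2) < ε},
          d2GaussKer (m + 1) (by omega) t y =
        -Mconst (m + 1) * (ε ^ ((m + 1 : ℕ) : ℝ) *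
          (φ t * (Real.exp (-ε ^ 2 / (4 * t)) * t ^ (-((m + 1 : ℕ) : ℝ) / 2 - 1)))) := by
    rintro t ⟨ht, -⟩
    rw [setIntegral_d2GaussKer m _ t hε, hM, div_eq_mul_inv,
      inv_mul_two_mul_sqrt_pi_mul_pow _ ht, Real.rpow_natCast]
    ring
  rw [alphaFun, setIntegral_congr_fun measurableSet_Ioc hinner, integral_const_mul,
    integral_const_mul, setIntegral_Ioc_heat_rescale _ _ hε]
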